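/- For every m ≥ 1 one has the concatenation identities E_{m+1,1} = E_{m,1}·δ_m·E_{m,1} and E_{m+1,2} = E_{m,1}·δ_m·E_{m,1}·δ_m·E_{m,1}, where δ_m is viewed as a one-letter word. -/

import Mathlib

namespace PD

/-- The period-doubling substitution on the alphabet `Bool`,
where `false` stands for the letter `a` and `true` for the letter `b`:
`σ(a) = ab`, `σ(b) = aa`. -/
def sub : Bool → List Bool
  | false => [false, true]
  | true  => [false, false]

/-- The substitution applied to a finite word. -/
def subW (w : List Bool) : List Bool := w.flatMap sub

/-- `A m = σ^m(a)`. -/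
def A (m : ℕ) : List Bool := subW^[m] [false]

/-- `B m = σ^m(b)`. -/
def B (m : ℕ) : List Bool := subW^[m] [true]

/-- The doubling sequence `D∞` (0-indexed: `D n` is the `(n+1)`-th letter),
the fixed point of `σ` beginning with `a`; `A m` is a prefix of `A (m+1)`,
and `A (n+1)` has length `2^(n+1) > n`. -/
def D (n : ℕ) : Bool := (A (n + 1)).getD n false

/-- `δ m`, the last letter of `A m`. -/
def delta (m : ℕ) : Bool := (A m).getLastD false

/-- The envelope words (`i ∈ {1,2}`): `E m 1 = A m` minus its last letter,
`E m 2 = A (m-1) ++ (A m` minus its last letter `)`. -/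
def E (m i : ℕ) : List Bool :=
  if i = 1 then (A m).dropLast else A (m - 1) ++ (A m).dropLast

/-- `w` occurs at the (1-indexed) position `j` in the finite word `τ`. -/
def OccursIn (w τ : List Bool) (j : ℕ) : Prop :=
  1 ≤ j ∧ (τ.drop (j - 1)).take w.length = w

/-- `w` occurs at the (1-indexed) position `j` in the doubling sequence. -/
def OccursD (w : List Bool) (j : ℕ) : Prop :=
  1 ≤ j ∧ ∀ k < w.length, D (j - 1 + k) = w.getD k false

/-- `w` is a factor of the doubling sequence. -/
def FactorD (w : List Bool) : Prop := ∃ j, OccursD w j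

/-- `L w p`: the (1-indexed) starting position of the `p`-th occurrence of `w`
in the doubling sequence, occurrences being ordered by starting position.
(Each factor occurs infinitely often, so `Nat.nth` enumerates all occurrences
in increasing order.) -/
noncomputable def L (w : List Bool) (p : ℕ) : ℕ := Nat.nth (OccursD w) (p - 1)

/-- The strict total order on envelope words:
`E m₁ i₁ ⊏ E m₂ i₂` iff `m₁ < m₂`, or `m₁ = m₂` and `i₁ < i₂`. -/
def EnvLt (m₁ i₁ m₂ i₂ : ℕ) : Prop := m₁ < m₂ ∨ (m₁ = m₂ ∧ i₁ < i₂)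

/-- `Env(w) = E m i`: the envelope word `E m i` is the `⊏`-minimal envelope
word containing `w` as a factor. -/
def IsEnv (w : List Bool) (m i : ℕ) : Prop :=
  1 ≤ m ∧ (i = 1 ∨ i = 2) ∧ w <:+: E m i ∧
    ∀ m' i', 1 ≤ m' → (i' = 1 ∨ i' = 2) → EnvLt m' i' m i → ¬ w <:+: E m' i'

/-- The substitution `φ₁(a) = a`, `φ₁(b) = bb`. -/
def phi1 : Bool → List Bool
  | false => [false]
  | true  => [true, true]

/-- `Θ₁ = φ₁(D∞)` (0-indexed): `φ₁(A (n+1))` is a prefix of `Θ₁` of length `> n`. -/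
def Theta1 (n : ℕ) : Bool := ((A (n + 1)).flatMap phi1).getD n false

/-- The substitution `φ₂(a) = ab`, `φ₂(b) = acac`, over the alphabet `Fin 3`
where `0` stands for `a`, `1` for `b` and `2` for `c`. -/
def phi2 : Bool → List (Fin 3)
  | false => [0, 1]
  | true  => [0, 2, 0, 2]

/-- `Θ₂ = φ₂(D∞)` (0-indexed). -/
def Theta2 (n : ℕ) : Fin 3 := ((A (n + 1)).flatMap phi2).getD n 0

/-- `N₁(x,p)`: the number of letters `x` among the first `p` letters of `Θ₁`. -/
def N1 (x : Bool) (p : ℕ) : ℕ := ((List.range p).map Theta1).count x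

/-- `N₂(x,p)`: the number of letters `x` among the first `p` letters of `Θ₂`. -/
def N2 (x : Fin 3) (p : ℕ) : ℕ := ((List.range p).map Theta2).count x

end PD

/-!
`σ^{m+1}(a) = σ^m(a) σ^m(b)` and `σ^{m+1}(b) = σ^m(a) σ^m(a)`, so by induction `σ^m(a)` and
`σ^m(b)` differ only in their last letter. Hence deleting the last letter of `σ^{m+1}(a)` leaves
`σ^m(a)` followed by `σ^m(a)` without its last letter `δ_m`, which is the first identity; the
second follows by prepending `σ^m(a) = E_{m,1} δ_m`.
-/

namespace PD

lemma subW_append (u v : List Bool) : subW (u ++ v) = subW u ++ subW v :=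
  List.flatMap_append

lemma subW_ne_nil {w : List Bool} (hw : w ≠ []) : subW w ≠ [] := by
  obtain ⟨x, u, rfl⟩ := List.exists_cons_of_ne_nil hw
  cases x <;> simp [subW, sub]

lemma iterate_subW_ne_nil {w : List Bool} (hw : w ≠ []) (m : ℕ) : subW^[m] w ≠ [] := by
  induction m with
  | zero => exact hw
  | succ m ih => exact Function.iterate_succ_apply' subW m w ▸ subW_ne_nil ih

lemma A_ne_nil (m : ℕ) : A m ≠ [] := iterate_subW_ne_nil (List.cons_ne_nil _ _) m

lemma B_ne_nil (m : ℕ) : B m ≠ [] := iterate_subW_ne_nil (List.cons_ne_nil _ _) m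

lemma A_succ (m : ℕ) : A (m + 1) = subW (A m) :=
  Function.iterate_succ_apply' subW m [false]

lemma B_succ (m : ℕ) : B (m + 1) = subW (B m) :=
  Function.iterate_succ_apply' subW m [true]

lemma A_succ_eq_append (m : ℕ) : A (m + 1) = A m ++ B m := by
  induction m with
  | zero => rfl
  | succ m ih => rw [A_succ, ih, subW_append, ← A_succ, ← B_succ, ih]

lemma B_succ_eq_append (m : ℕ) : B (m + 1) = A m ++ A m := by
  induction m with
  | zero => rfl
  | succ m ih => rw [B_succ, ih, subW_append, ← A_succ]

lemma dropLast_B_eq_dropLast_A (m : ℕ) : (B m).dropLast = (A m).dropLast := by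
  induction m with
  | zero => rfl
  | succ m ih =>
    rw [B_succ_eq_append, A_succ_eq_append, List.dropLast_append_of_ne_nil (A_ne_nil m),
      List.dropLast_append_of_ne_nil (B_ne_nil m), ih]

lemma dropLast_A_append_delta (m : ℕ) : (A m).dropLast ++ [delta m] = A m := by
  rw [delta, List.getLastD_eq_getLast?, List.getLast?_eq_some_getLast (A_ne_nil m)]
  exact List.dropLast_append_getLast (A_ne_nil m)

lemma E_one (m : ℕ) : E m 1 = (A m).dropLast := if_pos rfl

lemma E_two_succ (m : ℕ) : E (m + 1) 2 = A m ++ E (m + 1) 1 := rfl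

lemma dropLast_A_succ (m : ℕ) : (A (m + 1)).dropLast = A m ++ (A m).dropLast := by
  rw [A_succ_eq_append, List.dropLast_append_of_ne_nil (B_ne_nil m), dropLast_B_eq_dropLast_A]

end PD

open PD
theorem doubling_envelope_concat_general (m : ℕ) :
    E (m + 1) 1 = E m 1 ++ [delta m] ++ E m 1 ∧
      E (m + 1) 2 = E m 1 ++ [delta m] ++ E m 1 ++ [delta m] ++ E m 1 := by
  have h1 : E (m + 1) 1 = E m 1 ++ [delta m] ++ E m 1 := by
    rw [E_one, E_one, dropLast_A_succ, dropLast_A_append_delta]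
  refine ⟨h1, ?_⟩
  rw [E_two_succ, h1, ← dropLast_A_append_delta, ← E_one]
  simp only [List.append_assoc]

/-- For every `m ≥ 1`, `E (m+1) 1 = E m 1 · δ_m · E m 1` and
`E (m+1) 2 = E m 1 · δ_m · E m 1 · δ_m · E m 1`. -/
theorem doubling_envelope_concat (m : ℕ) (hm : 1 ≤ m) :
    E (m + 1) 1 = E m 1 ++ [delta m] ++ E m 1 ∧
      E (m + 1) 2 = E m 1 ++ [delta m] ++ E m 1 ++ [delta m] ++ E m 1 :=
  doubling_envelope_concat_general m
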